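/- arXiv:math/0205297 — 4 statements merged into one kernel-verified Lean document; each statement's English description precedes it below -/
import Mathlib

section
/- Let P(X_1, ..., X_p; ν^1, ..., ν^q) be a real polynomial map on (ℝ^m)^p × ((ℝ^m)*)^q, multilinear and alternating separately in the vectors X_1,...,X_p and in the covectors ν^1,...,ν^q, which is invariant under the diagonal action of GL(m, ℝ). If m ≥ max(p, q) and p ≠ q, then P = 0; if p = q, then P is a scalar multiple of the pairing ⟨X_1 ∧ ... ∧ X_p, ν^1 ∧ ... ∧ ν^p⟩ = det(⟨X_i, ν^j⟩). -/
open Matrix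

/-- Diagonal scaling linear equivalence on `Fin m → ℝ`. -/
noncomputable def scaleEquiv {m : ℕ} (c : Fin m → ℝ) (hc : ∀ l, c l ≠ 0) :
    (Fin m → ℝ) ≃ₗ[ℝ] (Fin m → ℝ) :=
  LinearEquiv.ofLinear
    (LinearMap.pi fun l => c l • LinearMap.proj l)
    (LinearMap.pi fun l => (c l)⁻¹ • LinearMap.proj l)
    (by ext x l
        simp only [LinearMap.coe_comp, Function.comp_apply, LinearMap.pi_apply,
          LinearMap.smul_apply, LinearMap.proj_apply, LinearMap.id_coe, id_eq, smul_eq_mul]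
        rw [← mul_assoc, mul_inv_cancel₀ (hc l), one_mul])
    (by ext x l
        simp only [LinearMap.coe_comp, Function.comp_apply, LinearMap.pi_apply,
          LinearMap.smul_apply, LinearMap.proj_apply, LinearMap.id_coe, id_eq, smul_eq_mul]
        rw [← mul_assoc, inv_mul_cancel₀ (hc l), one_mul])

@[simp] lemma scaleEquiv_apply {m : ℕ} (c : Fin m → ℝ) (hc : ∀ l, c l ≠ 0)
    (x : Fin m → ℝ) (l : Fin m) : scaleEquiv c hc x l = c l * x l := rfl

@[simp] lemma scaleEquiv_symm_apply {m : ℕ} (c : Fin m → ℝ) (hc : ∀ l, c l ≠ 0)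
    (x : Fin m → ℝ) (l : Fin m) : (scaleEquiv c hc).symm x l = (c l)⁻¹ * x l := rfl

/-- Coordinate permutation linear equivalence on `Fin m → ℝ`. -/
noncomputable def permEquiv {m : ℕ} (ρ : Equiv.Perm (Fin m)) :
    (Fin m → ℝ) ≃ₗ[ℝ] (Fin m → ℝ) :=
  LinearEquiv.ofLinear
    (LinearMap.pi fun k => LinearMap.proj (ρ.symm k))
    (LinearMap.pi fun k => LinearMap.proj (ρ k))
    (by ext x l; simp [LinearMap.pi_apply])
    (by ext x l; simp [LinearMap.pi_apply])

@[simp] lemma permEquiv_apply {m : ℕ} (ρ : Equiv.Perm (Fin m)) (x : Fin m → ℝ) (k : Fin m) :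
    permEquiv ρ x k = x (ρ.symm k) := rfl

@[simp] lemma permEquiv_symm_apply {m : ℕ} (ρ : Equiv.Perm (Fin m)) (x : Fin m → ℝ) (k : Fin m) :
    (permEquiv ρ).symm x k = x (ρ k) := rfl

/-- Any two injections of a fintype into another are related by a permutation. -/
lemma exists_perm_comp {q m : ℕ} (f g : Fin q → Fin m) (hf : Function.Injective f)
    (hg : Function.Injective g) : ∃ ρ : Equiv.Perm (Fin m), ∀ i, ρ (f i) = g i := by
  classical
  have hcard : Fintype.card ((Set.range f)ᶜ : Set (Fin m)) =
      Fintype.card ((Set.range g)ᶜ : Set (Fin m)) := by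
    rw [Fintype.card_compl_set, Fintype.card_compl_set,
      Set.card_range_of_injective hf, Set.card_range_of_injective hg]
  refine ⟨((Equiv.Set.sumCompl (Set.range f)).symm.trans
      (Equiv.sumCongr (((Equiv.ofInjective f hf).symm).trans (Equiv.ofInjective g hg))
        (Fintype.equivOfCardEq hcard))).trans (Equiv.Set.sumCompl (Set.range g)), ?_⟩
  intro i
  have hmem : f i ∈ Set.range f := ⟨i, rfl⟩
  simp only [Equiv.trans_apply]
  rw [Equiv.Set.sumCompl_symm_apply_of_mem hmem]
  simp

/-- The coercion from alternating maps to multilinear maps as a linear map. -/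
def altToMul {R : Type*} [CommSemiring R] {M N ι : Type*} [AddCommMonoid M] [AddCommMonoid N]
    [Module R M] [Module R N] :
    (AlternatingMap R M N ι) →ₗ[R] MultilinearMap R (fun _ : ι => M) N where
  toFun f := f.toMultilinearMap
  map_add' _ _ := rfl
  map_smul' _ _ := rfl

/-- first fundamental theorem type statement.  Let
`P(X₁,...,X_p; ν¹,...,ν^q)` be a real polynomial map on `(ℝ^m)^p × ((ℝ^m)*)^q`,
multilinear and alternating separately in the vectors and in the covectors (encoded as a
nested alternating multilinear map), invariant under the diagonal action of `GL(m,ℝ)`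
(standard action on vectors, contragredient action `g·ν = ν ∘ g⁻¹` on covectors).
If `m ≥ max p q` and `p ≠ q` then `P = 0`; if `p = q` then `P` is a scalar multiple of
the pairing `⟨X₁ ∧ ... ∧ X_p, ν¹ ∧ ... ∧ ν^p⟩ = det(⟨X_i, ν^j⟩)`. -/
theorem stmt4 (m p q : ℕ) (hm : max p q ≤ m)
    (P : AlternatingMap ℝ (Fin m → ℝ)
      (AlternatingMap ℝ (Module.Dual ℝ (Fin m → ℝ)) ℝ (Fin q)) (Fin p))
    (hinv : ∀ g : (Fin m → ℝ) ≃ₗ[ℝ] (Fin m → ℝ),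
      ∀ (X : Fin p → (Fin m → ℝ)) (ν : Fin q → Module.Dual ℝ (Fin m → ℝ)),
        P (fun i => g (X i)) (fun j => (ν j).comp (g.symm : (Fin m → ℝ) →ₗ[ℝ] (Fin m → ℝ)))
          = P X ν) :
    (p ≠ q → P = 0) ∧
      (∀ h : p = q, ∃ c : ℝ, ∀ (X : Fin p → (Fin m → ℝ))
        (ν : Fin q → Module.Dual ℝ (Fin m → ℝ)),
          P X ν = c * Matrix.det (Matrix.of fun i j : Fin q => ν j (X (Fin.cast h.symm i)))) := by
  classical
  constructor
  · -- scaling argument: if p ≠ q then P = 0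
    intro hpq
    have key : ∀ X ν, P X ν = 0 := by
      intro X ν
      have h2 : ∀ l : Fin m, ((fun _ => (2:ℝ)) l) ≠ 0 := fun _ => two_ne_zero
      have h1 := hinv (scaleEquiv (fun _ => (2:ℝ)) h2) X ν
      have hX : (fun i => scaleEquiv (fun _ => (2:ℝ)) h2 (X i)) = fun i => (2:ℝ) • X i := by
        funext i l; simp
      have hν : (fun j => (ν j).comp
          ((scaleEquiv (fun _ => (2:ℝ)) h2).symm : (Fin m → ℝ) →ₗ[ℝ] (Fin m → ℝ)))
          = fun j => (2:ℝ)⁻¹ • ν j := by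
        funext j
        refine LinearMap.ext fun x => ?_
        have hsx : (scaleEquiv (fun _ => (2:ℝ)) h2).symm x = (2:ℝ)⁻¹ • x := by
          funext l; simp
        rw [LinearMap.comp_apply]
        erw [hsx]
        rw [(ν j).map_smul]
        rfl
      rw [hX, hν] at h1
      have e1 : P (fun i => (2:ℝ) • X i) = ((2:ℝ)^p) • P X := by
        have := P.toMultilinearMap.map_smul_univ (fun _ : Fin p => (2:ℝ)) X
        simpa [Finset.prod_const] using this
      have e2 : (P X) (fun j => (2:ℝ)⁻¹ • ν j) = ((2:ℝ)⁻¹)^q • (P X) ν := by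
        have := (P X).toMultilinearMap.map_smul_univ (fun _ : Fin q => (2:ℝ)⁻¹) ν
        simpa [Finset.prod_const] using this
      rw [e1] at h1
      rw [AlternatingMap.smul_apply, e2] at h1
      have hfac : (2:ℝ)^p * ((2:ℝ)⁻¹)^q ≠ 1 := by
        intro hcon
        rw [inv_pow, mul_inv_eq_one₀ (by positivity)] at hcon
        have hnat : ((2^p : ℕ) : ℝ) = ((2^q : ℕ) : ℝ) := by push_cast; exact hcon
        exact hpq (Nat.pow_right_injective le_rfl (Nat.cast_injective hnat))
      simp only [smul_eq_mul] at h1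
      have hz : ((2:ℝ)^p * ((2:ℝ)⁻¹)^q - 1) * P X ν = 0 := by
        rw [sub_mul, one_mul, mul_assoc, h1, sub_self]
      rcases mul_eq_zero.mp hz with h | h
      · exact absurd (sub_eq_zero.mp h) hfac
      · exact h
    ext X ν
    simp [key]
  · -- p = q : multiple of the determinant pairing
    intro h
    subst h
    have hq : p ≤ m := le_trans (le_max_left _ _) hm
    set e : Module.Basis (Fin m) ℝ (Fin m → ℝ) := Pi.basisFun ℝ (Fin m) with he
    set B : Module.Basis (Fin m) ℝ (Module.Dual ℝ (Fin m → ℝ)) := e.dualBasis with hBdef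
    have hB : ∀ (k : Fin m) (x : Fin m → ℝ), B k x = x k := by
      intro k x
      simp [hBdef, Module.Basis.coe_dualBasis, Module.Basis.coord_apply, he, Pi.basisFun_repr]
    have hBe : ∀ k l, B k (e l) = if l = k then 1 else 0 := fun k l =>
      Module.Basis.dualBasis_apply_self _ _ _
    set c0 : Fin p → Fin m := Fin.castLE hq with hc0def
    have hc0 : Function.Injective c0 := Fin.castLE_injective hq
    set c : ℝ := P (fun i => e (c0 i)) (fun j => B (c0 j)) with hcdef
    -- invariance under coordinate permutations
    have hperm : ∀ r : Fin p → Fin m, Function.Injective r →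
        P (fun i => e (r i)) (fun j => B (r j)) = c := by
      intro r hr
      obtain ⟨ρ, hρ⟩ := exists_perm_comp c0 r hc0 hr
      have h1 := hinv (permEquiv ρ) (fun i => e (c0 i)) (fun j => B (c0 j))
      have hgX : (fun i => permEquiv ρ (e (c0 i))) = fun i => e (r i) := by
        funext i
        funext k
        rw [← hρ i]
        simp [he, Pi.basisFun_apply, Pi.single_apply, Equiv.symm_apply_eq]
      have hgν : (fun j => (B (c0 j)).comp
          ((permEquiv ρ).symm : (Fin m → ℝ) →ₗ[ℝ] (Fin m → ℝ))) = fun j => B (r j) := by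
        funext j
        ext x
        rw [← hρ j]
        simp [hB]
      rw [hgX, hgν] at h1
      exact h1
    -- vanishing when some covector index is not among the vector indices
    have hvanish : ∀ (r s : Fin p → Fin m) (j0 : Fin p), Function.Injective s →
        (∀ i, r i ≠ s j0) →
        P (fun i => e (r i)) (fun j => B (s j)) = 0 := by
      intro r s j0 hs hrs
      set k := s j0 with hk
      have hknz : ∀ l : Fin m, ((fun l => if l = k then (2:ℝ) else 1) l) ≠ 0 := by
        intro l; dsimp only; split <;> norm_num
      set g := scaleEquiv (fun l => if l = k then (2:ℝ) else 1) hknz with hg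
      have h1 := hinv g (fun i => e (r i)) (fun j => B (s j))
      have hgX : (fun i => g (e (r i))) = fun i => e (r i) := by
        funext i l
        simp only [hg, scaleEquiv_apply]
        by_cases hl : l = k
        · have hne : k ≠ r i := Ne.symm (hrs i)
          simp [he, Pi.basisFun_apply, Pi.single_apply, hl, hne]
        · simp [hl]
      have hgν : (fun j => (B (s j)).comp (g.symm : (Fin m → ℝ) →ₗ[ℝ] (Fin m → ℝ)))
          = Function.update (fun j => B (s j)) j0 ((2:ℝ)⁻¹ • B k) := by
        funext j
        by_cases hj : j = j0
        · subst hj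
          rw [Function.update_self]
          refine LinearMap.ext fun x => ?_
          simp [hB, hg, ← hk]
        · rw [Function.update_of_ne hj]
          refine LinearMap.ext fun x => ?_
          have hne : s j ≠ k := fun hh => hj (hs (hk ▸ hh))
          simp [hB, hg, hne]
      rw [hgX, hgν] at h1
      rw [AlternatingMap.map_update_smul] at h1
      have hupd : Function.update (fun j => B (s j)) j0 (B k) = fun j => B (s j) := by
        rw [hk]
        exact Function.update_eq_self _ _
      rw [hupd, smul_eq_mul] at h1
      linarith
    -- the key computation on basis vectors
    have key : ∀ r s : Fin p → Fin m,
        P (fun i => e (r i)) (fun j => B (s j))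
          = c * Matrix.det (Matrix.of fun j i => B (s j) (e (r i))) := by
      intro r s
      by_cases hr : Function.Injective r
      · by_cases hs : Function.Injective s
        · by_cases hss : ∀ j, ∃ i, r i = s j
          · choose σ0 hσ0 using hss
            have hσinj : Function.Injective σ0 := by
              intro j j' hjj
              exact hs (by rw [← hσ0 j, ← hσ0 j', hjj])
            set σ : Equiv.Perm (Fin p) :=
              Equiv.ofBijective σ0 (Finite.injective_iff_bijective.mp hσinj) with hσdef
            have hσ : ∀ j, r (σ j) = s j := fun j => hσ0 j
            -- matrix is a permuted identity
            have hmat : (Matrix.of fun j i => B (s j) (e (r i)))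
                = (1 : Matrix (Fin p) (Fin p) ℝ).submatrix σ id := by
              ext j i
              simp only [Matrix.of_apply, Matrix.submatrix_apply, Matrix.one_apply, id_eq]
              rw [← hσ j, hBe]
              by_cases hij : r i = r (σ j)
              · rw [if_pos hij, if_pos (hr hij).symm]
              · rw [if_neg hij, if_neg (fun hh => hij (congrArg r hh.symm))]
            have hdet : Matrix.det (Matrix.of fun j i => B (s j) (e (r i)))
                = (Equiv.Perm.sign σ : ℤ) := by
              rw [hmat, Matrix.det_permute, Matrix.det_one, mul_one]
            -- left side via alternating property
            have hlhs : P (fun i => e (r i)) (fun j => B (s j))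
                = (Equiv.Perm.sign σ : ℤ) • (P (fun i => e (r i)) (fun j => B (r j))) := by
              have := (P (fun i => e (r i))).map_perm (fun j => B (r j)) σ
              have harg : ((fun j => B (r j)) ∘ σ) = fun j => B (s j) := by
                funext j; simp [Function.comp, hσ]
              rw [harg] at this
              rw [this, Units.smul_def]
            rw [hlhs, hperm r hr, hdet]
            rw [zsmul_eq_mul, mul_comm]
          · push_neg at hss
            obtain ⟨j0, hj0⟩ := hss
            rw [hvanish r s j0 hs (fun i hh => hj0 i hh)]
            have : Matrix.det (Matrix.of fun j i => B (s j) (e (r i))) = 0 := by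
              apply Matrix.det_eq_zero_of_row_eq_zero j0
              intro i
              simp only [Matrix.of_apply, hBe]
              rw [if_neg (fun hh => hj0 i hh)]
            rw [this, mul_zero]
        · obtain ⟨j, j', hjj, hne⟩ : ∃ j j', s j = s j' ∧ j ≠ j' := by
            simp only [Function.Injective] at hs
            push_neg at hs
            obtain ⟨a, b, hab, hne⟩ := hs
            exact ⟨a, b, hab, hne⟩
          have hlhs : P (fun i => e (r i)) (fun j => B (s j)) = 0 :=
            (P (fun i => e (r i))).map_eq_zero_of_eq _ (by rw [hjj]) hne
          have hrhs : Matrix.det (Matrix.of fun j i => B (s j) (e (r i))) = 0 :=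
            Matrix.det_zero_of_row_eq hne (by funext i; simp [hjj])
          rw [hlhs, hrhs, mul_zero]
      · obtain ⟨i, i', hii, hne⟩ : ∃ i i', r i = r i' ∧ i ≠ i' := by
          simp only [Function.Injective] at hr
          push_neg at hr
          obtain ⟨a, b, hab, hne⟩ := hr
          exact ⟨a, b, hab, hne⟩
        have hlhs : P (fun i => e (r i)) = 0 :=
          P.map_eq_zero_of_eq _ (by rw [hii]) hne
        have hrhs : Matrix.det (Matrix.of fun j i => B (s j) (e (r i))) = 0 :=
          Matrix.det_zero_of_column_eq hne (by intro j; simp [hii])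
        rw [hlhs, hrhs, mul_zero]
        simp
    -- bundle both sides as multilinear maps and extend from the basis
    set D : (Fin p → (Fin m → ℝ)) →
        MultilinearMap ℝ (fun _ : Fin p => Module.Dual ℝ (Fin m → ℝ)) ℝ :=
      fun X => (Matrix.detRowAlternating :
        AlternatingMap ℝ (Fin p → ℝ) ℝ (Fin p)).toMultilinearMap.compLinearMap
          (fun _ => LinearMap.pi fun i => LinearMap.applyₗ (X i)) with hDdef
    have hD : ∀ X ν, D X ν = Matrix.det (Matrix.of fun j i => ν j (X i)) := by
      intro X ν; rfl
    set G : MultilinearMap ℝ (fun _ : Fin p => (Fin m → ℝ))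
        (MultilinearMap ℝ (fun _ : Fin p => Module.Dual ℝ (Fin m → ℝ)) ℝ) :=
      { toFun := fun X => c • D X
        map_update_add' := by
          intro inst X i x y
          have hi : inst = instDecidableEqFin p := Subsingleton.elim _ _
          subst hi
          ext ν
          simp only [MultilinearMap.smul_apply, MultilinearMap.add_apply, hD, smul_eq_mul]
          have hmat : ∀ z : Fin m → ℝ,
              (Matrix.of fun j i' => ν j (Function.update X i z i'))
                = (Matrix.of fun j i' => ν j (X i')).updateCol i (fun j => ν j z) := by
            intro z
            ext j i'
            by_cases hi : i' = i
            · subst hi; simp [Matrix.updateCol_apply]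
            · simp [Matrix.updateCol_apply, hi, Function.update_of_ne hi]
          rw [hmat (x + y), hmat x, hmat y]
          have hfn : (fun j => ν j (x + y)) = (fun j => ν j x) + (fun j => ν j y) := by
            funext j; simp
          rw [hfn, Matrix.det_updateCol_add]
          ring
        map_update_smul' := by
          intro inst X i a x
          have hi : inst = instDecidableEqFin p := Subsingleton.elim _ _
          subst hi
          ext ν
          simp only [MultilinearMap.smul_apply, smul_eq_mul, hD]
          have hmat : ∀ z : Fin m → ℝ,
              (Matrix.of fun j i' => ν j (Function.update X i z i'))
                = (Matrix.of fun j i' => ν j (X i')).updateCol i (fun j => ν j z) := by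
            intro z
            ext j i'
            by_cases hi : i' = i
            · subst hi; simp [Matrix.updateCol_apply]
            · simp [Matrix.updateCol_apply, hi, Function.update_of_ne hi]
          rw [hmat (a • x), hmat x]
          have hfn : (fun j => ν j (a • x)) = a • (fun j => ν j x) := by
            funext j; simp
          rw [hfn, Matrix.det_updateCol_smul]
          ring } with hGdef
    set F : MultilinearMap ℝ (fun _ : Fin p => (Fin m → ℝ))
        (MultilinearMap ℝ (fun _ : Fin p => Module.Dual ℝ (Fin m → ℝ)) ℝ) :=
      altToMul.compMultilinearMap P.toMultilinearMap with hFdef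
    have hFG : F = G := by
      apply Module.Basis.ext_multilinear (fun _ => e)
      intro r
      apply Module.Basis.ext_multilinear (fun _ => B)
      intro s
      have hFval : F (fun i => e (r i)) (fun j => B (s j))
          = P (fun i => e (r i)) (fun j => B (s j)) := rfl
      have hGval : G (fun i => e (r i)) (fun j => B (s j))
          = c * Matrix.det (Matrix.of fun j i => B (s j) (e (r i))) := by
        simp only [hGdef, MultilinearMap.coe_mk, MultilinearMap.smul_apply, hD, smul_eq_mul]
      rw [hFval, hGval]
      exact key r s
    refine ⟨c, fun X ν => ?_⟩
    have h2 : F X ν = c * Matrix.det (Matrix.of fun j i => ν j (X i)) := by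
      rw [hFG]
      simp only [hGdef, MultilinearMap.coe_mk, MultilinearMap.smul_apply, hD, smul_eq_mul]
    show P X ν = c * Matrix.det (Matrix.of fun i j : Fin p => ν j (X i))
    rw [← Matrix.det_transpose]
    exact h2
end

section
/- Let T_r = c_r · α_0^r · det(α_i, δ_i^j) for r ∈ {0, ..., k}, where det(α_i, δ_i^j) is the determinant of the p × p matrix whose first column is (α_1,...,α_p) and whose remaining p−1 columns are (δ_i^j)_{j=1,...,p−1}. If these polynomials satisfy ∂_{α_0}∂_{α_i} T_r = r · ∂_{α_i} T_{r−1} for all r ∈ {1,...,k} and all i ∈ {1,...,p}, then c_r = c_0 for all r ∈ {0,...,k}. -/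
open MvPolynomial

lemma aeval_pderiv_comm {σ τ : Type*} [DecidableEq σ] [DecidableEq τ]
    (g : σ → MvPolynomial τ ℝ) (x : σ) (y : τ)
    (hg : ∀ v, pderiv y (g v) = if v = x then 1 else 0)
    (f : MvPolynomial σ ℝ) :
    pderiv y (aeval g f) = aeval g (pderiv x f) := by
  induction f using MvPolynomial.induction_on with
  | C a => simp
  | add f₁ f₂ hf₁ hf₂ => simp only [map_add, hf₁, hf₂]
  | mul_X f v hf =>
    rw [map_mul, aeval_X, pderiv_mul, hf, hg v, pderiv_mul, map_add, map_mul, map_mul, aeval_X]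
    by_cases hvx : v = x
    · subst hvx; simp [pderiv_X_self, mul_comm, add_comm]
    · rw [pderiv_X_of_ne hvx]; simp [hvx]

noncomputable def g9 (p : ℕ) (i₀ : Fin p) : Unit ⊕ Fin p × Fin p → MvPolynomial (Fin 2) ℝ :=
  Sum.elim (fun _ => X 0)
    (fun ij => if ij.1 = i₀ ∧ ij.2 = i₀ then X 1 else if ij.1 = ij.2 then 1 else 0)

@[simp] lemma g9_inl (p : ℕ) (i₀ : Fin p) (u : Unit) : g9 p i₀ (Sum.inl u) = X 0 := rfl

@[simp] lemma g9_inr (p : ℕ) (i₀ : Fin p) (i j : Fin p) :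
    g9 p i₀ (Sum.inr (i, j)) =
      if i = i₀ ∧ j = i₀ then X 1 else if i = j then 1 else 0 := rfl


/-- The candidate invariant `T_r = c_r · α₀^r · det(α_i, δ_i^j)` for the case
`q = p - 1`: the variable `Sum.inl ()` is `α₀`, and `Sum.inr (i, j)` is the `(i,j)`-entry
of the `p × p` matrix whose column `0` is `(α₁,...,α_p)` and whose remaining `p - 1`
columns are the `(δ_i^j)`. -/
noncomputable def T₉ (p : ℕ) (c : ℕ → ℝ) (r : ℕ) :
    MvPolynomial (Unit ⊕ Fin p × Fin p) ℝ :=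
  C (c r) * X (Sum.inl ()) ^ r *
    (Matrix.of fun i j : Fin p => X (Sum.inr (i, j))).det

/-- If the polynomials `T_r = c_r α₀^r det(α_i, δ_i^j)`
(`r ∈ {0,...,k}`) satisfy `∂_{α₀} ∂_{α_i} T_r = r · ∂_{α_i} T_{r−1}` for all
`r ∈ {1,...,k}` and all `i ∈ {1,...,p}` (here `α_i` is the variable in position
`(i, 0)` of the matrix), then `c_r = c_0` for all `r ∈ {0,...,k}`. -/
theorem stmt9 (p k : ℕ) (hp : 1 ≤ p) (c : ℕ → ℝ)
    (h : ∀ r : ℕ, 1 ≤ r → r ≤ k → ∀ i : Fin p,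
      pderiv (Sum.inl ()) (pderiv (Sum.inr (i, (⟨0, by omega⟩ : Fin p))) (T₉ p c r)) =
        C (r : ℝ) * pderiv (Sum.inr (i, (⟨0, by omega⟩ : Fin p))) (T₉ p c (r - 1))) :
    ∀ r : ℕ, r ≤ k → c r = c 0 := by
  set i₀ : Fin p := ⟨0, hp⟩ with hi₀
  have hg1 : ∀ v, pderiv (1 : Fin 2) ((g9 p i₀) v) =
      if v = Sum.inr (i₀, i₀) then 1 else 0 := by
    rintro (⟨⟩ | ⟨i, j⟩)
    · simp [g9]
    · by_cases hi : i = i₀ <;> by_cases hj : j = i₀ <;>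
        by_cases h2 : i = j <;>
        simp_all [pderiv_X_of_ne, Prod.ext_iff]
  have hg0 : ∀ v, pderiv (0 : Fin 2) ((g9 p i₀) v) =
      if v = Sum.inl () then 1 else 0 := by
    rintro (⟨⟩ | ⟨i, j⟩)
    · simp [pderiv_X_of_ne]
    · by_cases hi : i = i₀ <;> by_cases hj : j = i₀ <;>
        by_cases h2 : i = j <;>
        simp_all [pderiv_X_of_ne, Prod.ext_iff]
  -- image of T₉ under aeval (g9 p i₀)
  have hT : ∀ r, aeval (g9 p i₀) (T₉ p c r) = C (c r) * X 0 ^ r * X 1 := by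
    intro r
    have hdet : (aeval (g9 p i₀) : MvPolynomial (Unit ⊕ Fin p × Fin p) ℝ →ₐ[ℝ] MvPolynomial (Fin 2) ℝ)
        ((Matrix.of fun i j : Fin p => X (Sum.inr (i, j))).det)
        = X (1 : Fin 2) := by
      have hmd := AlgHom.map_det
        (R := ℝ) (aeval (g9 p i₀) : MvPolynomial (Unit ⊕ Fin p × Fin p) ℝ →ₐ[ℝ] MvPolynomial (Fin 2) ℝ)
        (Matrix.of fun i j : Fin p => X (Sum.inr (i, j)))
      rw [hmd]
      have : ((aeval (g9 p i₀) : MvPolynomial (Unit ⊕ Fin p × Fin p) ℝ →ₐ[ℝ]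
              MvPolynomial (Fin 2) ℝ).mapMatrix (Matrix.of fun i j : Fin p => X (Sum.inr (i, j))))
          = Matrix.diagonal (fun i : Fin p => if i = i₀ then X (1 : Fin 2) else 1) := by
        ext i j
        by_cases hij : i = j
        · subst hij
          by_cases hii : i = i₀ <;>
            simp [Matrix.map_apply, Matrix.diagonal, hii]
        · have hni : ¬(i = i₀ ∧ j = i₀) := fun hh => hij (hh.1.trans hh.2.symm)
          simp [Matrix.map_apply, Matrix.diagonal, hij, hni]
      rw [this, Matrix.det_diagonal, Finset.prod_ite_eq' Finset.univ i₀]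
      simp
    rw [T₉, map_mul, map_mul, map_pow, hdet, algHom_C, aeval_X, g9_inl]
    rfl
  -- the key step: c r = c (r - 1) for 1 ≤ r ≤ k
  have step : ∀ r : ℕ, 1 ≤ r → r ≤ k → c r = c (r - 1) := by
    intro r hr1 hrk
    have heq := h r hr1 hrk i₀
    have heq2 := congrArg (aeval (g9 p i₀)) heq
    rw [map_mul, ← aeval_pderiv_comm (g9 p i₀) _ 0 hg0,
      ← aeval_pderiv_comm (g9 p i₀) _ 1 hg1, ← aeval_pderiv_comm (g9 p i₀) _ 1 hg1,
      algHom_C, hT, hT] at heq2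
    rw [show algebraMap ℝ (MvPolynomial (Fin 2) ℝ) (r:ℝ) = C (r:ℝ) from rfl] at heq2
    -- compute both sides
    have e1 : pderiv (1 : Fin 2) (C (c r) * X 0 ^ r * X (1 : Fin 2))
        = C (c r) * X 0 ^ r := by
      simp [pderiv_mul, pderiv_pow]
    have e1' : pderiv (1 : Fin 2) (C (c (r-1)) * X 0 ^ (r-1) * X (1 : Fin 2))
        = C (c (r-1)) * X 0 ^ (r-1) := by
      simp [pderiv_mul, pderiv_pow]
    rw [e1, e1'] at heq2
    have e2 : pderiv (0 : Fin 2) (C (c r) * X (0 : Fin 2) ^ r)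
        = C (c r * r) * X 0 ^ (r - 1) := by
      obtain ⟨m, rfl⟩ : ∃ m, r = m + 1 := ⟨r - 1, by omega⟩
      simp only [pderiv_mul, pderiv_pow, pderiv_C, pderiv_X_self]
      push_cast
      ring_nf
      simp [mul_comm, mul_assoc, mul_left_comm]
      ring
    rw [e2] at heq2
    have heq3 : C (c r * r) * X (0 : Fin 2) ^ (r-1)
        = C ((r : ℝ) * c (r-1)) * X 0 ^ (r-1) := by
      rw [heq2]; rw [map_mul]; ring
    have hX : (X (0 : Fin 2) : MvPolynomial (Fin 2) ℝ) ^ (r-1) ≠ 0 :=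
      pow_ne_zero _ (X_ne_zero 0)
    have := mul_right_cancel₀ hX heq3
    have hcr : c r * r = r * c (r - 1) := C_injective _ _ this
    have hr0 : (r : ℝ) ≠ 0 := Nat.cast_ne_zero.mpr (by omega)
    have h2 : c r * (r : ℝ) = c (r - 1) * r := by rw [hcr]; ring
    exact mul_right_cancel₀ hr0 h2
  intro r hrk
  induction r with
  | zero => rfl
  | succ n ih =>
    have := step (n+1) (by omega) hrk
    simpa [this] using ih (by omega)
end

section
/- Let T_r = c_r α_0^r det(δ_i^j) + d_r α_0^{r−1} Σ_{n=1}^p α_n det_{n0}(δ_i^j) for r ∈ {0,...,k}, where det(δ_i^j) is the p×p determinant of the matrix (δ_i^j)_{i,j=1..p}, and det_{n0}(δ_i^j) is this determinant with row n replaced by (δ_0^1,...,δ_0^p). If these satisfy the equations ∂_{α_0}∂_{α_n} T_r = r ∂_{α_n} T_{r−1} and 2 ∂_{α_0}∂_{δ_0^j} T_r = r ∂_{δ_0^j} T_{r−1} for r ∈ {2,...,k}, then d_r = 0 for all r ∈ {0,...,k} whenever k ≥ 2. -/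
open MvPolynomial

/-- The candidate invariant for the case `q = p` (`p > 0`):
`T_r = c_r α₀^r det(δ_i^j) + d_r α₀^{r−1} Σ_{n=1}^p α_n det_{n0}(δ_i^j)`,
where `Sum.inl ι` is `α_ι` (`ι ∈ {0,...,p}`), `Sum.inr (ι, j)` is `δ_ι^j`
(`ι ∈ {0,...,p}`, `j ∈ {1,...,p}`), `det(δ_i^j)` is the determinant of the `p × p`
matrix `(δ_i^j)_{i,j=1..p}`, and `det_{n0}` is this determinant with row `n` replaced by
`(δ₀^1,...,δ₀^p)`. -/
noncomputable def T₁₄ (p : ℕ) (c d : ℕ → ℝ) (r : ℕ) :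
    MvPolynomial (Fin (p + 1) ⊕ Fin (p + 1) × Fin p) ℝ :=
  C (c r) * X (Sum.inl 0) ^ r *
      (Matrix.of fun i j : Fin p => X (Sum.inr (i.succ, j))).det +
    C (d r) * X (Sum.inl 0) ^ (r - 1) *
      ∑ n : Fin p, X (Sum.inl n.succ) *
        (Matrix.of fun i j : Fin p =>
          X (Sum.inr (if i = n then 0 else i.succ, j))).det

namespace Stmt14Aux

noncomputable section

open Matrix

variable {p : ℕ}

/-- The variable index type. -/
abbrev Idx (p : ℕ) := Fin (p + 1) ⊕ Fin (p + 1) × Fin p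

/-- Variable map for the main determinant. -/
def gD (p : ℕ) : Fin p × Fin p → Idx p := fun ic => Sum.inr (ic.1.succ, ic.2)

/-- Variable map for the determinant with row `n` replaced by the `δ₀` row. -/
def gE (p : ℕ) (n : Fin p) : Fin p × Fin p → Idx p :=
  fun ic => Sum.inr (if ic.1 = n then 0 else ic.1.succ, ic.2)

lemma gD_inj : Function.Injective (gD p) := by
  rintro ⟨i, c⟩ ⟨i', c'⟩ h
  simp only [gD, Sum.inr.injEq, Prod.mk.injEq] at h
  exact Prod.ext (Fin.succ_injective _ h.1) h.2

lemma gE_inj (n : Fin p) : Function.Injective (gE p n) := by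
  rintro ⟨i, c⟩ ⟨i', c'⟩ h
  simp only [gE, Sum.inr.injEq, Prod.mk.injEq] at h
  obtain ⟨h1, h2⟩ := h
  refine Prod.ext ?_ h2
  split_ifs at h1 with hi hi' hi'
  · rw [hi, hi']
  · exact absurd h1.symm (Fin.succ_ne_zero i')
  · exact absurd h1 (Fin.succ_ne_zero i)
  · exact Fin.succ_injective _ h1

/-- The main determinant `det(δ_i^j)`. -/
def DD (p : ℕ) : MvPolynomial (Idx p) ℝ :=
  (Matrix.of fun i j : Fin p => X (Sum.inr (i.succ, j))).det

/-- The determinant `det_{n0}(δ_i^j)`. -/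
def EE (p : ℕ) (n : Fin p) : MvPolynomial (Idx p) ℝ :=
  (Matrix.of fun i j : Fin p => X (Sum.inr (if i = n then 0 else i.succ, j))).det

lemma DD_eq : DD p = rename (gD p) (Matrix.mvPolynomialX (Fin p) (Fin p) ℝ).det := by
  rw [DD, AlgHom.map_det]
  congr 1
  ext i j
  simp [gD, Matrix.mvPolynomialX_apply]

lemma EE_eq (n : Fin p) :
    EE p n = rename (gE p n) (Matrix.mvPolynomialX (Fin p) (Fin p) ℝ).det := by
  rw [EE, AlgHom.map_det]
  congr 1
  ext i j
  simp [gE, Matrix.mvPolynomialX_apply]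

/-- `pderiv` kills a polynomial coming from variables avoiding `b`. -/
lemma pderiv_rename_zero {σ τ : Type*} [DecidableEq τ] (g : σ → τ) {b : τ}
    (hb : ∀ a, g a ≠ b) (f : MvPolynomial σ ℝ) : pderiv b (rename g f) = 0 := by
  classical
  apply pderiv_eq_zero_of_notMem_vars
  intro h
  obtain ⟨a, -, ha⟩ := Finset.mem_image.mp (vars_rename g f h)
  exact hb a ha

lemma pderiv_DD_inl (v : Fin (p + 1)) : pderiv (Sum.inl v : Idx p) (DD p) = 0 := by
  rw [DD_eq]
  exact pderiv_rename_zero _ (fun a => by simp [gD]) _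

lemma pderiv_DD_inr0 (j : Fin p) : pderiv (Sum.inr (0, j) : Idx p) (DD p) = 0 := by
  rw [DD_eq]
  refine pderiv_rename_zero _ ?_ _
  rintro ⟨i, c⟩ h
  simp only [gD, Sum.inr.injEq, Prod.mk.injEq] at h
  exact Fin.succ_ne_zero i h.1

lemma pderiv_EE_inl (n : Fin p) (v : Fin (p + 1)) :
    pderiv (Sum.inl v : Idx p) (EE p n) = 0 := by
  rw [EE_eq]
  exact pderiv_rename_zero _ (fun a => by simp [gE]) _

/-- The cofactor polynomial (in the generic matrix variables). -/
def AdjP (p : ℕ) (n j : Fin p) : MvPolynomial (Fin p × Fin p) ℝ :=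
  ((Matrix.mvPolynomialX (Fin p) (Fin p) ℝ).updateRow n (Pi.single j 1)).det

/-- The cofactor `∂_{δ₀^j} det_{n0}`. -/
def F (p : ℕ) (n j : Fin p) : MvPolynomial (Idx p) ℝ := rename (gD p) (AdjP p n j)

lemma pderiv_F_inl (n j : Fin p) (v : Fin (p + 1)) :
    pderiv (Sum.inl v : Idx p) (F p n j) = 0 :=
  pderiv_rename_zero _ (fun a => by simp [gD]) _

lemma EE_row_expand (n : Fin p) :
    EE p n = ∑ j' : Fin p, X (Sum.inr ((0 : Fin (p + 1)), j')) * F p n j' := by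
  rw [EE, Matrix.det_eq_sum_mul_adjugate_row _ n]
  refine Finset.sum_congr rfl fun j' _ => ?_
  congr 1
  · simp
  · rw [Matrix.adjugate_apply, F, AdjP, AlgHom.map_det]
    congr 1
    ext i c
    by_cases hi : i = n
    · subst hi
      simp [Matrix.updateRow_self, Pi.single_apply, apply_ite (rename (gD p))]
    · simp [Matrix.updateRow_ne hi, gD, Matrix.mvPolynomialX_apply, hi]

lemma pderiv_F_inr0 (n j j' : Fin p) :
    pderiv (Sum.inr ((0 : Fin (p + 1)), j) : Idx p) (F p n j') = 0 := by
  refine pderiv_rename_zero _ ?_ _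
  rintro ⟨i, c⟩ h
  simp only [gD, Sum.inr.injEq, Prod.mk.injEq] at h
  exact Fin.succ_ne_zero i h.1

lemma pderiv_EE_inr0 (n j : Fin p) :
    pderiv (Sum.inr ((0 : Fin (p + 1)), j) : Idx p) (EE p n) = F p n j := by
  rw [EE_row_expand, map_sum]
  rw [Finset.sum_eq_single j]
  · rw [pderiv_mul, pderiv_X_self, pderiv_F_inr0, mul_zero, add_zero, one_mul]
  · intro j' _ hj'
    rw [pderiv_mul, pderiv_F_inr0, mul_zero, add_zero, pderiv_X_of_ne, zero_mul]
    simp [hj']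
  · simp

lemma EE_ne_zero (n : Fin p) : EE p n ≠ 0 := by
  rw [EE_eq]
  intro h
  exact Matrix.det_mvPolynomialX_ne_zero (Fin p) ℝ
    (rename_injective _ (gE_inj n) (by rwa [map_zero]))

lemma AdjP_ne_zero (n j : Fin p) : AdjP p n j ≠ 0 := by
  intro h
  set σ₀ : Equiv.Perm (Fin p) := Equiv.swap n j with hσ₀
  have h2 := congrArg (eval fun ic : Fin p × Fin p => σ₀.permMatrix ℝ ic.1 ic.2) h
  rw [AdjP, RingHom.map_det, map_zero] at h2
  have hM : (eval fun ic : Fin p × Fin p => σ₀.permMatrix ℝ ic.1 ic.2).mapMatrix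
      ((Matrix.mvPolynomialX (Fin p) (Fin p) ℝ).updateRow n (Pi.single j 1)) =
      σ₀.permMatrix ℝ := by
    ext i c
    by_cases hi : i = n
    · have hswap : σ₀ n = j := Equiv.swap_apply_left n j
      simp only [RingHom.mapMatrix_apply, Matrix.map_apply, hi, Matrix.updateRow_self]
      rw [Pi.single_apply]
      simp [Equiv.Perm.permMatrix, PEquiv.toMatrix_apply, Equiv.toPEquiv_apply, hswap,
        apply_ite (eval fun ic : Fin p × Fin p => σ₀.permMatrix ℝ ic.1 ic.2), eq_comm]
    · simp [RingHom.mapMatrix_apply, Matrix.map_apply, Matrix.updateRow_ne hi,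
        Matrix.mvPolynomialX_apply]
  rw [hM, Matrix.det_permutation] at h2
  simp at h2


lemma F_ne_zero (n j : Fin p) : F p n j ≠ 0 := by
  rw [F]
  intro h
  exact AdjP_ne_zero n j (rename_injective _ gD_inj (by rwa [map_zero]))

lemma pderiv_sum_alpha (m : Fin p) (B : Fin p → MvPolynomial (Idx p) ℝ)
    (hB : ∀ n, pderiv (Sum.inl m.succ : Idx p) (B n) = 0) :
    pderiv (Sum.inl m.succ : Idx p) (∑ n : Fin p, X (Sum.inl n.succ) * B n) = B m := by
  rw [map_sum, Finset.sum_eq_single m]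
  · rw [pderiv_mul, hB, mul_zero, add_zero, pderiv_X_self, one_mul]
  · intro n _ hn
    rw [pderiv_mul, hB, mul_zero, add_zero, pderiv_X_of_ne, zero_mul]
    simp [Fin.succ_inj, hn]
  · simp

lemma pderiv_sum_alpha_zero (B : Fin p → MvPolynomial (Idx p) ℝ)
    (hB : ∀ n, pderiv (Sum.inl (0 : Fin (p + 1)) : Idx p) (B n) = 0) :
    pderiv (Sum.inl (0 : Fin (p + 1)) : Idx p)
      (∑ n : Fin p, X (Sum.inl n.succ) * B n) = 0 := by
  rw [map_sum, Finset.sum_eq_zero]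
  intro n _
  rw [pderiv_mul, hB, mul_zero, add_zero, pderiv_X_of_ne, zero_mul]
  simp [Fin.succ_ne_zero n]

lemma T_decomp (c d : ℕ → ℝ) (r : ℕ) :
    T₁₄ p c d r = C (c r) * X (Sum.inl 0) ^ r * DD p +
      C (d r) * X (Sum.inl 0) ^ (r - 1) * ∑ n : Fin p, X (Sum.inl n.succ) * EE p n := rfl

lemma pderiv_T_alpha (c d : ℕ → ℝ) (r : ℕ) (n : Fin p) :
    pderiv (Sum.inl n.succ : Idx p) (T₁₄ p c d r) =
      C (d r) * X (Sum.inl 0) ^ (r - 1) * EE p n := by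
  have hne : (Sum.inl (0 : Fin (p + 1)) : Idx p) ≠ Sum.inl n.succ := by
    simp [(Fin.succ_ne_zero n).symm]
  rw [T_decomp, map_add, pderiv_mul, pderiv_DD_inl, mul_zero, add_zero, pderiv_mul,
    pderiv_C, zero_mul, zero_add, pderiv_pow, pderiv_X_of_ne hne, mul_zero, mul_zero,
    zero_mul, zero_add, pderiv_mul, pderiv_mul, pderiv_C, zero_mul, zero_add,
    pderiv_pow, pderiv_X_of_ne hne, mul_zero, mul_zero, zero_mul, zero_add,
    pderiv_sum_alpha n (EE p) (fun m => pderiv_EE_inl m n.succ)]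

lemma pderiv0_aux (a : ℝ) (s : ℕ) (Q : MvPolynomial (Idx p) ℝ)
    (hQ : pderiv (Sum.inl (0 : Fin (p + 1)) : Idx p) Q = 0) :
    pderiv (Sum.inl 0 : Idx p) (C a * X (Sum.inl 0) ^ s * Q) =
      C (a * s) * (X (Sum.inl 0) ^ (s - 1) * Q) := by
  rw [pderiv_mul, hQ, mul_zero, add_zero, pderiv_mul, pderiv_C, zero_mul, zero_add,
    pderiv_pow, pderiv_X_self, mul_one,
    show ((s : ℕ) : MvPolynomial (Idx p) ℝ) = C (s : ℝ) by simp, C_mul]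
  ring

lemma pderiv_T_delta (c d : ℕ → ℝ) (r : ℕ) (j : Fin p) :
    pderiv (Sum.inr ((0 : Fin (p + 1)), j) : Idx p) (T₁₄ p c d r) =
      C (d r) * X (Sum.inl 0) ^ (r - 1) *
        ∑ n : Fin p, X (Sum.inl n.succ) * F p n j := by
  have hne : (Sum.inl (0 : Fin (p + 1)) : Idx p) ≠ Sum.inr (0, j) := by simp
  have hS : pderiv (Sum.inr ((0 : Fin (p + 1)), j) : Idx p)
      (∑ n : Fin p, X (Sum.inl n.succ) * EE p n) =
      ∑ n : Fin p, X (Sum.inl n.succ) * F p n j := by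
    rw [map_sum]
    refine Finset.sum_congr rfl fun n _ => ?_
    rw [pderiv_mul, pderiv_X_of_ne (by simp), zero_mul, zero_add, pderiv_EE_inr0]
  rw [T_decomp, map_add, pderiv_mul, pderiv_DD_inr0, mul_zero, add_zero, pderiv_mul,
    pderiv_C, zero_mul, zero_add, pderiv_pow, pderiv_X_of_ne hne, mul_zero, mul_zero,
    zero_mul, zero_add, pderiv_mul, pderiv_mul, pderiv_C, zero_mul, zero_add,
    pderiv_pow, pderiv_X_of_ne hne, mul_zero, mul_zero, zero_mul, zero_add, hS]

lemma cancelC {P : MvPolynomial (Idx p) ℝ} (hP : P ≠ 0) {a b : ℝ}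
    (h : C a * P = C b * P) : a = b :=
  C_injective _ ℝ (mul_right_cancel₀ hP h)

end

end Stmt14Aux

/-- If the polynomials
`T_r = c_r α₀^r det(δ_i^j) + d_r α₀^{r−1} Σ_n α_n det_{n0}(δ_i^j)` satisfy
`∂_{α₀} ∂_{α_n} T_r = r ∂_{α_n} T_{r−1}` and `2 ∂_{α₀} ∂_{δ₀^j} T_r = r ∂_{δ₀^j} T_{r−1}`
for `r ∈ {2,...,k}`, then `d_r = 0` for all `r ∈ {0,...,k}` whenever `k ≥ 2`.
(The hypothesis `d 0 = 0` records that `T₀`, being a polynomial, cannot contain the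
term with the negative power `α₀^{0-1}`.) -/
theorem stmt14 (p k : ℕ) (hp : 1 ≤ p) (hk : 2 ≤ k) (c d : ℕ → ℝ)
    (hd0 : d 0 = 0)
    (h1 : ∀ r : ℕ, 2 ≤ r → r ≤ k → ∀ n : Fin p,
      pderiv (Sum.inl 0) (pderiv (Sum.inl n.succ) (T₁₄ p c d r)) =
        C (r : ℝ) * pderiv (Sum.inl n.succ) (T₁₄ p c d (r - 1)))
    (h2 : ∀ r : ℕ, 2 ≤ r → r ≤ k → ∀ j : Fin p,
      2 * pderiv (Sum.inl 0) (pderiv (Sum.inr (0, j)) (T₁₄ p c d r)) =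
        C (r : ℝ) * pderiv (Sum.inr (0, j)) (T₁₄ p c d (r - 1))) :
    ∀ r : ℕ, r ≤ k → d r = 0 := by
  classical
  open Stmt14Aux in
  set n₀ : Fin p := ⟨0, hp⟩ with hn₀
  have key : ∀ r : ℕ, 2 ≤ r → r ≤ k → d r = 0 ∧ d (r - 1) = 0 := by
    intro r hr2 hrk
    have hAE : X (Sum.inl 0 : Idx p) ^ (r - 2) * EE p n₀ ≠ 0 :=
      mul_ne_zero (pow_ne_zero _ (X_ne_zero _)) (EE_ne_zero n₀)
    have h11 : r - 1 - 1 = r - 2 := by omega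
    -- first equation
    have e1 : d r * ((r - 1 : ℕ) : ℝ) = (r : ℝ) * d (r - 1) := by
      have e := h1 r hr2 hrk n₀
      rw [pderiv_T_alpha, pderiv_T_alpha,
        pderiv0_aux _ _ _ (pderiv_EE_inl n₀ 0), h11] at e
      have e' : C (d r * ((r - 1 : ℕ) : ℝ)) * (X (Sum.inl 0 : Idx p) ^ (r - 2) * EE p n₀) =
          C ((r : ℝ) * d (r - 1)) * (X (Sum.inl 0 : Idx p) ^ (r - 2) * EE p n₀) := by
        rw [e, C_mul]; ring
      exact cancelC hAE e'
    -- second equation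
    have hG : (∑ n : Fin p, X (Sum.inl n.succ) * F p n n₀) ≠ 0 := by
      intro h
      have h' := congrArg (pderiv (Sum.inl n₀.succ : Idx p)) h
      rw [pderiv_sum_alpha n₀ _ (fun m => pderiv_F_inl m n₀ n₀.succ), map_zero] at h'
      exact F_ne_zero n₀ n₀ h'
    have hAG : X (Sum.inl 0 : Idx p) ^ (r - 2) *
        (∑ n : Fin p, X (Sum.inl n.succ) * F p n n₀) ≠ 0 :=
      mul_ne_zero (pow_ne_zero _ (X_ne_zero _)) hG
    have e2 : 2 * (d r * ((r - 1 : ℕ) : ℝ)) = (r : ℝ) * d (r - 1) := by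
      have e := h2 r hr2 hrk n₀
      rw [pderiv_T_delta, pderiv_T_delta,
        pderiv0_aux _ _ _ (pderiv_sum_alpha_zero _ (fun m => pderiv_F_inl m n₀ 0)), h11] at e
      have e' : C (2 * (d r * ((r - 1 : ℕ) : ℝ))) *
            (X (Sum.inl 0 : Idx p) ^ (r - 2) * ∑ n : Fin p, X (Sum.inl n.succ) * F p n n₀) =
          C ((r : ℝ) * d (r - 1)) *
            (X (Sum.inl 0 : Idx p) ^ (r - 2) * ∑ n : Fin p, X (Sum.inl n.succ) * F p n n₀) := by
        rw [C_mul] at e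
        rw [C_mul, C_mul, C_mul, map_ofNat C 2]
        linear_combination e
      exact cancelC hAG e'
    have hx : d r * ((r - 1 : ℕ) : ℝ) = 0 := by linarith [e1, e2]
    have hr1 : ((r - 1 : ℕ) : ℝ) ≠ 0 := Nat.cast_ne_zero.mpr (by omega)
    have hdr : d r = 0 := by
      rcases mul_eq_zero.mp hx with h | h
      · exact h
      · exact absurd h hr1
    refine ⟨hdr, ?_⟩
    have : (r : ℝ) * d (r - 1) = 0 := by rw [← e1, hdr, zero_mul]
    rcases mul_eq_zero.mp this with h | h
    · exact absurd h (Nat.cast_ne_zero.mpr (by omega))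
    · exact h
  intro r hrk
  rcases Nat.eq_zero_or_pos r with rfl | hr1
  · exact hd0
  by_cases hrk' : r + 1 ≤ k
  · have h := (key (r + 1) (by omega) hrk').2
    simpa using h
  · have hrk2 : r = k := by omega
    subst hrk2
    exact (key r hk le_rfl).1
end

section
/- Let T_r (r ∈ {0,...,k}) be polynomials in variables u = α_0 and δ (scalar variables over ℝ) of the form T_0 = 0, T_r = c_r u^{r−1} δ for r ≥ 1, satisfying ∂_u^2 T_r = r ∂_u T_{r−1} for r ∈ {2,...,k} and 2 ∂_u ∂_δ T_r = r ∂_δ T_{r−1} for r ∈ {2,...,k}. If k = 2 then c_1 = c_2; if k ≥ 3 then c_r = 0 for all r. -/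
open MvPolynomial

/-- Let `T r` be polynomials in two variables `u` (index `0`) and `δ`
(index `1`) of the form `T 0 = 0`, `T r = c r • u^{r−1} δ` for `r ≥ 1`, satisfying
`∂_u² T r = r ∂_u T (r−1)` and `2 ∂_u ∂_δ T r = r ∂_δ T (r−1)` for `r ∈ {2,...,k}`.
If `k = 2` then `c 1 = c 2`; if `k ≥ 3` then `c r = 0` for all `r ∈ {1,...,k}`. -/
theorem stmt18 (k : ℕ) (c : ℕ → ℝ)
    (T : ℕ → MvPolynomial (Fin 2) ℝ)
    (hT0 : T 0 = 0)
    (hT : ∀ r : ℕ, 1 ≤ r → r ≤ k → T r = C (c r) * X 0 ^ (r - 1) * X 1)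
    (h1 : ∀ r : ℕ, 2 ≤ r → r ≤ k →
      pderiv 0 (pderiv 0 (T r)) = C (r : ℝ) * pderiv 0 (T (r - 1)))
    (h2 : ∀ r : ℕ, 2 ≤ r → r ≤ k →
      2 * pderiv 0 (pderiv 1 (T r)) = C (r : ℝ) * pderiv 1 (T (r - 1))) :
    (k = 2 → c 1 = c 2) ∧ (3 ≤ k → ∀ r : ℕ, 1 ≤ r → r ≤ k → c r = 0) := by
  have key2 : ∀ m : ℕ, m + 2 ≤ k →
      2 * (c (m + 2) * ((m : ℝ) + 1)) = ((m : ℝ) + 2) * c (m + 1) := by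
    intro m hm
    have e := h2 (m + 2) (by omega) hm
    rw [hT (m + 2) (by omega) hm, show m + 2 - 1 = m + 1 from rfl,
      hT (m + 1) (by omega) (by omega), show m + 1 - 1 = m from rfl] at e
    have e' := congrArg (eval (fun _ => (1 : ℝ))) e
    simpa [pderiv_mul, pderiv_X_self, pderiv_X_of_ne, pderiv_pow] using e'
  have hp2 : (pderiv (0 : Fin 2)) (2 : MvPolynomial (Fin 2) ℝ) = 0 := by
    rw [show (2 : MvPolynomial (Fin 2) ℝ) = C 2 from (map_ofNat C 2).symm, pderiv_C]
  have key1 : ∀ m : ℕ, m + 3 ≤ k →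
      c (m + 3) * (((m : ℝ) + 2) * ((m : ℝ) + 1)) = ((m : ℝ) + 3) * (c (m + 2) * ((m : ℝ) + 1)) := by
    intro m hm
    have e := h1 (m + 3) (by omega) hm
    rw [hT (m + 3) (by omega) hm, show m + 3 - 1 = m + 2 from rfl,
      hT (m + 2) (by omega) (by omega), show m + 2 - 1 = m + 1 from rfl] at e
    have e' := congrArg (eval (fun _ => (1 : ℝ))) e
    simpa [pderiv_mul, pderiv_X_self, pderiv_X_of_ne, pderiv_pow, hp2, mul_comm, mul_assoc,
      mul_left_comm] using e'
  constructor
  · intro hk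
    have := key2 0 (by omega)
    push_cast at this
    linarith
  · intro hk3
    have h3 : c 3 = 0 := by
      have a := key1 0 (by omega)
      have b := key2 1 (by omega)
      push_cast at a b
      linarith
    have h2' : c 2 = 0 := by
      have b := key2 1 (by omega)
      push_cast at b
      linarith
    have h1' : c 1 = 0 := by
      have b := key2 0 (by omega)
      push_cast at b
      linarith
    intro r hr hrk
    induction r with
    | zero => omega
    | succ n ih =>
      match n, ih with
      | 0, _ => exact h1'
      | 1, _ => exact h2'
      | 2, _ => exact h3
      | (m + 3), ih =>
        have hc : c (m + 3) = 0 := ih (by omega) (by omega)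
        have b := key2 (m + 2) (by omega)
        push_cast at b
        rw [show m + 2 + 2 = m + 4 from rfl, show m + 2 + 1 = m + 3 from rfl, hc] at b
        have : (m : ℝ) + 3 ≠ 0 := by positivity
        have := mul_eq_zero.mp (by linarith : c (m + 4) * ((m : ℝ) + 3) = 0)
        tauto
end
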